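/- arXiv:1702.08350 — 2 statements merged into one kernel-verified Lean document; each statement's English description precedes it below -/
import Mathlib

section
/- Every consistent computably enumerable first-order theory T in a computable language containing only function and constant symbols (no relation symbols) admits a computable quotient presentation: there is a structure on the natural numbers whose interpretations of the function and constant symbols are computable, together with an equivalence relation E on ℕ that is a congruence with respect to all these operations, such that the quotient structure ℕ/E is a model of T. -/
/-!
Observation 1 of the paper: every consistent computably enumerable theory `T` in a
computable functional language (one whose symbols are coded by natural numbers and which
has no relation symbols) admits a computable quotient presentation: a structure on `ℕ`
with computable operations, together with an equivalence relation `E` on `ℕ` that is a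
congruence for the operations, whose quotient `ℕ/E` is a model of `T`.

Consistency of the first-order theory `T` is rendered, as is usual in Mathlib's model
theory library (which has no proof calculus), by its semantic equivalent
`Theory.IsSatisfiable` (the two are equivalent by the Gödel completeness theorem).
The equivalence relation together with the congruence property is packaged as a
`Setoid` together with a `FirstOrder.Language.Prestructure`, and the quotient structure
is Mathlib's induced structure on `Quotient s`.
-/

namespace CQP

open FirstOrder FirstOrder.Language

/-- A canonical numerical code for a sentence of a language whose function symbols are
encodable and which has no relation symbols, via Mathlib's list encoding of formulas. -/
def sentenceCode (L : FirstOrder.Language.{0, 0}) (encF : ∀ n, Encodable (L.Functions n))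
    (norel : ∀ n, IsEmpty (L.Relations n)) (σ : L.Sentence) : ℕ :=
  letI : ∀ n, Encodable (L.Functions n) := encF
  letI : Encodable (Σ n, L.Relations n) :=
    ⟨fun x => (norel x.1).elim x.2, fun _ => none, fun x => (norel x.1).elim x.2⟩
  Encodable.encode (BoundedFormula.listEncode σ)

end CQP

/-!
Take a countable model `M` of `T` (downward Löwenheim–Skolem) and enumerate it as `g : ℕ → M`.
Let `ℕ` code the terms over the generators `0, 1, 2, …`: `2 i` codes the generator `i`, and the
operations of `ℕ` merely write down codes of applications, which is primitive recursive. Evaluating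
coded terms in `M` via `g` is a surjective homomorphism `ℕ → M`, so its kernel `E` is a congruence
and `ℕ/E ≅ M ⊨ T`.
-/

universe u v

theorem Denumerable.lt_of_mem_ofNat_list {x : ℕ} : ∀ {n : ℕ}, x ∈ ofNat (List ℕ) n → x < n
  | 0, h => by simp at h
  | n + 1, h => by
    rw [list_ofNat_succ, List.mem_cons] at h
    rcases h with rfl | h
    · exact Nat.lt_succ_of_le (Nat.unpair_left_le n)
    · exact ((lt_of_mem_ofNat_list h).trans_le (Nat.unpair_right_le n)).trans (Nat.lt_succ_self n)
  decreasing_by exact (Nat.unpair_right_le n).trans_lt (Nat.lt_succ_self n)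

namespace FirstOrder.Language

open Structure

theorem Theory.IsSatisfiable.exists_countable_model {L : Language.{u, v}} [Countable L.Symbols]
    {T : L.Theory} (hT : T.IsSatisfiable) : ∃ M : T.ModelType.{u, v, max u v}, Countable M := by
  obtain ⟨M⟩ := hT
  have : Countable (Σ n, (L.sum L.skolem₁).Functions n) := by
    rw [← Cardinal.mk_le_aleph0_iff]
    exact L.card_functions_sum_skolem₁_le.trans (max_le le_rfl Cardinal.mk_le_aleph0)
  let S : L.ElementarySubstructure M :=
    (⊥ : (L.sum L.skolem₁).Substructure M).elementarySkolem₁Reduct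
  refine ⟨S.toModel T, ?_⟩
  change Countable (⊥ : (L.sum L.skolem₁).Substructure M)
  rw [← Substructure.closure_empty]
  exact Set.countable_empty.substructure_closure _

section Comap

variable {L : Language} {α M : Type*} [L.Structure M]

@[reducible] def comapStructure (F : ∀ {n}, L.Functions n → (Fin n → α) → α) (e : α → M) :
    L.Structure α where
  funMap := F
  RelMap r x := RelMap r (e ∘ x)

variable {F : ∀ {n}, L.Functions n → (Fin n → α) → α} {e : α → M}
  (he : ∀ {n} (f : L.Functions n) (x : Fin n → α), e (F f x) = funMap f (e ∘ x))
include he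

@[reducible] def kerPrestructure : L.Prestructure (Setoid.ker e) where
  toStructure := comapStructure F e
  fun_equiv {n} f x y hxy := by
    change e (F f x) = e (F f y)
    rw [he, he]
    exact congrArg _ (funext hxy)
  rel_equiv {n} r x y hxy := by
    change RelMap r (e ∘ x) = RelMap r (e ∘ y)
    exact congrArg _ (funext hxy)

theorem model_quotient_ker (hs : Function.Surjective e) (T : L.Theory) [M ⊨ T] :
    letI := kerPrestructure he; Quotient (Setoid.ker e) ⊨ T := by
  let := kerPrestructure he
  have out_eq {n : ℕ} (x : Fin n → Quotient (Setoid.ker e)) : x = fun i => ⟦(x i).out⟧ :=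
    funext fun i => (Quotient.out_eq _).symm
  let E : Quotient (Setoid.ker e) ≃[L] M :=
    { toEquiv := Setoid.quotientKerEquivOfSurjective e hs
      map_fun' := fun {n} f x => by
        rw [out_eq x, funMap_quotient_mk']
        exact he f _
      map_rel' := fun {n} r x => by
        rw [out_eq x, relMap_quotient_mk']
        rfl }
  exact StrongHomClass.theory_model E.symm

end Comap

end FirstOrder.Language

namespace CQP

open FirstOrder FirstOrder.Language Structure Encodable Denumerable

section CodedTerms

variable {L : Language} [Encodable (Σ n, L.Functions n)]

def codeFunc {n : ℕ} (f : L.Functions n) (x : Fin n → ℕ) : ℕ :=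
  2 * Nat.pair (encode (⟨n, f⟩ : Σ n, L.Functions n)) (encode (List.ofFn x)) + 1

theorem computable_codeFunc {n : ℕ} (f : L.Functions n) : Computable (codeFunc f) :=
  Primrec.to_comp <| Primrec.succ.comp <| Primrec.nat_mul.comp (Primrec.const 2) <|
    Primrec₂.natPair.comp (Primrec.const _) <| Primrec.encode.comp <|
      Primrec.list_ofFn fun i => Primrec.fin_app.comp Primrec.id (Primrec.const i)

variable (L) {M : Type*} [L.Structure M] (g : ℕ → M)

def evalCode (n : ℕ) : M :=
  if n % 2 = 0 then g (n / 2)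
  else
    match decode (α := Σ n, L.Functions n) (n / 2).unpair.1 with
    | some ⟨k, f⟩ =>
      if hk : (ofNat (List ℕ) (n / 2).unpair.2).length = k then
        funMap f fun i => evalCode ((ofNat (List ℕ) (n / 2).unpair.2)[(i : ℕ)]'(hk ▸ i.2))
      else g 0
    | none => g 0
termination_by n
decreasing_by
  refine (lt_of_mem_ofNat_list (List.getElem_mem _)).trans_le ?_
  have := Nat.unpair_right_le (n / 2)
  omega

variable {L}

theorem evalCode_two_mul (i : ℕ) : evalCode L g (2 * i) = g i := by
  rw [evalCode]
  simp

theorem evalCode_codeFunc {n : ℕ} (f : L.Functions n) (x : Fin n → ℕ) :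
    evalCode L g (codeFunc f x) = funMap f (evalCode L g ∘ x) := by
  rw [evalCode, codeFunc, if_neg (by omega)]
  simp only [show ∀ m, (2 * m + 1) / 2 = m by omega, Nat.unpair_pair, encodek, ofNat_encode,
    List.length_ofFn, dite_true, List.getElem_ofFn]
  rfl

theorem evalCode_surjective (hg : Function.Surjective g) : Function.Surjective (evalCode L g) :=
  hg.forall.2 fun i => ⟨2 * i, evalCode_two_mul g i⟩

end CodedTerms

theorem computable_quotient_presentation_of_ce_functional_theory_general
    (L : FirstOrder.Language.{0, 0})
    (encF : ∀ n, Encodable (L.Functions n))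
    (norel : ∀ n, IsEmpty (L.Relations n))
    (T : L.Theory)
    (hcons : T.IsSatisfiable) :
    ∃ (s : Setoid ℕ) (ps : L.Prestructure s),
      (∀ (n : ℕ) (f : L.Functions n),
        Computable fun v : Fin n → ℕ => @Structure.funMap L ℕ ps.toStructure n f v) ∧
      (letI := ps; Quotient s ⊨ T) := by
  have : Countable L.Symbols :=
    inferInstanceAs (Countable ((Σ n, L.Functions n) ⊕ Σ n, L.Relations n))
  obtain ⟨M, hM⟩ := hcons.exists_countable_model
  obtain ⟨g, hg⟩ := exists_surjective_nat M
  exact ⟨_, kerPrestructure (evalCode_codeFunc g), fun n f => computable_codeFunc f,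
    model_quotient_ker _ (evalCode_surjective g hg) T⟩

/-- **Observation 1.** Every consistent c.e. theory in a functional language admits a
computable quotient presentation. -/
theorem computable_quotient_presentation_of_ce_functional_theory
    (L : FirstOrder.Language.{0, 0})
    (encF : ∀ n, Encodable (L.Functions n))
    (norel : ∀ n, IsEmpty (L.Relations n))
    (T : L.Theory)
    (hcons : T.IsSatisfiable)
    (hce : REPred fun c : ℕ => ∃ σ ∈ T, sentenceCode L encF norel σ = c) :
    ∃ (s : Setoid ℕ) (ps : L.Prestructure s),
      (∀ (n : ℕ) (f : L.Functions n),
        Computable fun v : Fin n → ℕ => @Structure.funMap L ℕ ps.toStructure n f v) ∧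
      (letI := ps; Quotient s ⊨ T) :=
  computable_quotient_presentation_of_ce_functional_theory_general L encF norel T hcons

end CQP
end

section
/- There are no computable binary operations ⊕ and ⊗ on ℕ, a computably enumerable binary relation ≺ on ℕ, constants 0̄ and 1̄, and an equivalence relation E on ℕ of any complexity that is a congruence with respect to ⊕, ⊗ and ≺, such that the quotient structure (ℕ,⊕,⊗,0̄,1̄,≺)/E is a nonstandard model of Peano arithmetic in the language {+,·,0,1,<} whose standard system contains the halting problem 0'. -/
/-!
Corollary to Theorem 5: no nonstandard model of arithmetic in the language
`{+, ·, 0, 1, <}` with `0'` in its standard system has a computably enumerable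
quotient presentation by any equivalence relation, of any complexity.
-/

namespace CQP

open FirstOrder FirstOrder.Language FirstOrder.Language.BoundedFormula

/-- The function symbols of `{+, ·, 0, 1, <}`: constants `0`, `1` and binary `+`, `·`. -/
inductive Func : ℕ → Type
  | zero : Func 0
  | one : Func 0
  | plus : Func 2
  | times : Func 2

/-- The relation symbols: one binary relation symbol `<`. -/
inductive Rel : ℕ → Type
  | lt : Rel 2

/-- The first-order language `{+, ·, 0, 1, <}`. -/
def Lang : Language := ⟨Func, Rel⟩

/-- The constant term `0`. -/
def t0 {β : Type} : Lang.Term β := Term.func Func.zero ![]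

/-- The constant term `1`. -/
def t1 {β : Type} : Lang.Term β := Term.func Func.one ![]

/-- The term `t + u`. -/
def tadd {β : Type} (t u : Lang.Term β) : Lang.Term β :=
  Term.func Func.plus ![t, u]

/-- The term `t · u`. -/
def tmul {β : Type} (t u : Lang.Term β) : Lang.Term β :=
  Term.func Func.times ![t, u]

/-- The atomic formula `x < y`. -/
def ltR {n : ℕ} (x y : Fin n) : Lang.BoundedFormula Empty n :=
  Relations.boundedFormula₂ Rel.lt (&x) (&y)

/-- Realize a formula with free variables `Fin k` at the variables `g i` of a context `m`. -/
def app {k m : ℕ} (φ : Lang.Formula (Fin k)) (g : Fin k → Fin m) :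
    Lang.BoundedFormula Empty m :=
  BoundedFormula.relabel (fun i => Sum.inr (g i)) φ

def axAddComm : Lang.Sentence := alls (n := 2) (tadd &0 &1 =' tadd &1 &0)
def axAddAssoc : Lang.Sentence :=
  alls (n := 3) (tadd (tadd &0 &1) &2 =' tadd &0 (tadd &1 &2))
def axMulComm : Lang.Sentence := alls (n := 2) (tmul &0 &1 =' tmul &1 &0)
def axMulAssoc : Lang.Sentence :=
  alls (n := 3) (tmul (tmul &0 &1) &2 =' tmul &0 (tmul &1 &2))
def axDistrib : Lang.Sentence :=
  alls (n := 3) (tmul &0 (tadd &1 &2) =' tadd (tmul &0 &1) (tmul &0 &2))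
def axAddZero : Lang.Sentence := alls (n := 1) (tadd &0 t0 =' &0)
def axMulZero : Lang.Sentence := alls (n := 1) (tmul &0 t0 =' t0)
def axMulOne : Lang.Sentence := alls (n := 1) (tmul &0 t1 =' &0)
def axZeroNeOne : Lang.Sentence := ∼(t0 =' (t1 : Lang.Term (Empty ⊕ Fin 0)))
def axAddCancel : Lang.Sentence :=
  alls (n := 3) ((tadd &0 &1 =' tadd &0 &2) ⟹ (&1 =' &2))
def axSuccNeZero : Lang.Sentence := alls (n := 1) (∼(tadd &0 t1 =' t0))

/-- The defining axiom of the strict order: `x < y ↔ ∃ d, d ≠ 0 ∧ x + d = y`. -/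
def axLtDef : Lang.Sentence :=
  alls (n := 2) ((ltR 0 1) ⇔ (∃' ((∼((&2 : Lang.Term (Empty ⊕ Fin 3)) =' t0)) ⊓ (tadd &0 &2 =' &1))))

/-- Trichotomy for `<`. -/
def axLtTrichotomy : Lang.Sentence :=
  alls (n := 2) ((ltR 0 1) ⊔ ((&0 =' &1) ⊔ (ltR 1 0)))

/-- The induction axiom for a formula `φ(p₁,…,p_k, x)`, with `x` the induction
variable: the universal closure of
`∀ z, z = 0 → [φ(p⃗,z) ∧ ∀ x (φ(p⃗,x) → ∀ y (y = x + 1 → φ(p⃗,y)))] → ∀ x φ(p⃗,x)`. -/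
def indAx {k : ℕ} (φ : Lang.Formula (Fin (k + 1))) : Lang.Sentence :=
  let g₁ : Fin (k + 1) → Fin (k + 1) := Fin.snoc Fin.castSucc (Fin.last k)
  let g₂ : Fin (k + 1) → Fin (k + 2) :=
    Fin.snoc (fun i => i.castSucc.castSucc) (Fin.last (k + 1))
  let g₃ : Fin (k + 1) → Fin (k + 3) :=
    Fin.snoc (fun i => i.castSucc.castSucc.castSucc) (Fin.last (k + 2))
  let step : Lang.BoundedFormula Empty (k + 1) :=
    ∀' ((app φ g₂) ⟹
      ∀' (((&(Fin.last (k + 2))) =' tadd (&(⟨k + 1, by omega⟩ : Fin (k + 3))) t1) ⟹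
        (app φ g₃)))
  alls (n := k)
    (∀' (((&(Fin.last k)) =' t0) ⟹ (((app φ g₁) ⊓ step) ⟹ (∀' (app φ g₂)))))

/-- Peano arithmetic in the language `{+, ·, 0, 1, <}`. -/
def PA : Lang.Theory :=
  {axAddComm, axAddAssoc, axMulComm, axMulAssoc, axDistrib, axAddZero, axMulZero,
    axMulOne, axZeroNeOne, axAddCancel, axSuccNeZero, axLtDef, axLtTrichotomy} ∪
  {σ | ∃ (k : ℕ) (φ : Lang.Formula (Fin (k + 1))), σ = indAx φ}

/-- The standard model `(ℕ, +, ·, 0, 1, <)`. -/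
instance stdStructure : Lang.Structure ℕ where
  funMap {_} f v :=
    match f with
    | .zero => 0
    | .one => 1
    | .plus => v 0 + v 1
    | .times => v 0 * v 1
  RelMap {_} r v :=
    match r with
    | .lt => v 0 < v 1

/-- The pre-quotient structure `(ℕ, ⊕, ⊗, 0̄, 1̄, ≺)` together with the congruence `E`,
as a Mathlib `Prestructure`. -/
def pres (add mul : ℕ → ℕ → ℕ) (lt : ℕ → ℕ → Prop) (zbar obar : ℕ)
    (E : ℕ → ℕ → Prop) (hE : Equivalence E)
    (ha : ∀ x x' y y', E x x' → E y y' → E (add x y) (add x' y'))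
    (hm : ∀ x x' y y', E x x' → E y y' → E (mul x y) (mul x' y'))
    (hl : ∀ x x' y y', E x x' → E y y' → (lt x y ↔ lt x' y')) :
    Lang.Prestructure (Setoid.mk E hE) where
  toStructure :=
    { funMap := fun {_} f v =>
        match f with
        | .zero => zbar
        | .one => obar
        | .plus => add (v 0) (v 1)
        | .times => mul (v 0) (v 1)
      RelMap := fun {_} r v =>
        match r with
        | .lt => lt (v 0) (v 1) }
  fun_equiv := fun {_} {f} x y h => by
    cases f with
    | zero => exact hE.refl zbar
    | one => exact hE.refl obar
    | plus => exact ha _ _ _ _ (h 0) (h 1)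
    | times => exact hm _ _ _ _ (h 0) (h 1)
  rel_equiv := fun {_} {r} x y h => by
    cases r with
    | lt => exact propext (hl _ _ _ _ (h 0) (h 1))

/-- Representatives of the standard numbers: `n̄ = 1̄ ⊕ ⋯ ⊕ 1̄` (`n` times). -/
def nbar (add : ℕ → ℕ → ℕ) (zbar obar : ℕ) : ℕ → ℕ
  | 0 => zbar
  | n + 1 => add (nbar add zbar obar n) obar

/-- The halting problem `0' = {e | the e-th partial computable function halts on e}`. -/
def haltingProblem (e : ℕ) : Prop :=
  ((Denumerable.ofNat Nat.Partrec.Code e).eval e).Dom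

/-!
In any model of `PA`, division with remainder (an instance of induction) shows that for `p ≠ 0`,
`p ∤ a` holds iff `q * p < a < (q + 1) * p` for some `q`. In the quotient presentation these are
two instances of the c.e. relation `≺` between computable terms, and `E` does not occur. With
`p = p̄ₙ` and the code `a` of `0'`, the complement of `0'` becomes c.e.; since `0'` itself is
c.e., it would be computable.
-/

end CQP

section Computability

open Nat.Partrec (Code)
open Nat.Partrec.Code Encodable

variable {α β : Type*} [Primcodable α] [Primcodable β]

theorem REPred.comp {p : β → Prop} {f : α → β}
    (hp : REPred p) (hf : Computable f) : REPred fun a => p (f a) :=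
  Partrec.comp hp hf

theorem REPred.and {p q : α → Prop} (hp : REPred p)
    (hq : REPred q) : REPred fun a => p a ∧ q a := by
  refine (Partrec.bind hp (hq.comp Computable.fst).to₂).of_eq fun a => Part.ext fun u => ?_
  simp [Part.mem_assert_iff, Part.mem_bind_iff]

theorem Computable₂.rePred_exists_eq_true {f : α → ℕ → Bool}
    (hf : Computable₂ f) : REPred fun a => ∃ n, f a n = true := by
  refine (Partrec.rfind hf.partrec₂).dom_re.of_eq fun a => ?_
  simp [Nat.rfind_dom]

theorem REPred.exists_evaln_isSome {p : α → Prop} (hp : REPred p) :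
    ∃ c : Code, ∀ a, p a ↔ ∃ k, (evaln k c (encode a)).isSome := by
  obtain ⟨c, hc⟩ := Nat.Partrec.Code.exists_code.1 hp
  refine ⟨c, fun a => ?_⟩
  have hdom : (eval c (encode a)).Dom ↔ p a := by simp [hc, encodek, Part.assert]
  rw [← hdom, Part.dom_iff_mem]
  simp only [evaln_complete, Option.isSome_iff_exists]
  exact ⟨fun ⟨x, k, hk⟩ => ⟨k, x, hk⟩, fun ⟨k, x, hk⟩ => ⟨x, k, hk⟩⟩

/-- Dovetailing: search simultaneously for the witness and for the number of steps. -/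
theorem REPred.exists {p : α × ℕ → Prop} (hp : REPred p) :
    REPred fun a => ∃ n, p (a, n) := by
  obtain ⟨c, hc⟩ := hp.exists_evaln_isSome
  have hf : Computable₂ fun (a : α) (m : ℕ) =>
      (evaln m.unpair.1 c (encode (a, m.unpair.2))).isSome :=
    (Primrec.option_isSome.comp (primrec_evaln.comp
      (((Primrec.fst.comp (Primrec.unpair.comp Primrec.snd)).pair (Primrec.const c)).pair
        (Primrec.encode.comp
          (Primrec.fst.pair (Primrec.snd.comp (Primrec.unpair.comp Primrec.snd))))))).to_comp
  refine hf.rePred_exists_eq_true.of_eq fun a => ?_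
  simp only [hc]
  constructor
  · rintro ⟨m, hm⟩
    exact ⟨m.unpair.2, m.unpair.1, hm⟩
  · rintro ⟨n, k, hk⟩
    exact ⟨Nat.pair k n, by simpa using hk⟩

theorem Primrec.nat_dvd : PrimrecRel ((· ∣ ·) : ℕ → ℕ → Prop) :=
  (Primrec.eq.comp (Primrec.nat_mod.comp Primrec.snd Primrec.fst) (Primrec.const 0)).of_eq
    fun _ => Nat.dvd_iff_mod_eq_zero.symm

theorem Primrec.nat_prime : PrimrecPred Nat.Prime := by
  have hR : PrimrecRel fun m p : ℕ => ¬ m ∣ p ∨ m = 1 :=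
    Primrec.nat_dvd.not.or (Primrec.eq.comp Primrec.fst (Primrec.const 1))
  refine ((Primrec.nat_le.comp (Primrec.const 2) Primrec.id).and
    (hR.forall_lt.comp Primrec.id Primrec.id)).of_eq fun p => ?_
  simp only [id, Nat.prime_def_lt, imp_iff_not_or]

theorem Primrec.nat_count_prime : Primrec (Nat.count Nat.Prime) :=
  (Primrec.list_length.comp ((Primrec.listFilter Primrec.nat_prime).comp Primrec.list_range)).of_eq
    fun n => by simp [Nat.count, List.countP_eq_length_filter]

theorem Computable.nat_nth_prime : Computable (Nat.nth Nat.Prime) := by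
  have hex (n : ℕ) : ∃ m, Nat.Prime m ∧ Nat.count Nat.Prime m = n :=
    ⟨_, Nat.nth_mem_of_infinite Nat.infinite_setOfPred_prime n,
      Nat.count_nth_of_infinite Nat.infinite_setOfPred_prime n⟩
  have hP : ComputablePred fun q : ℕ × ℕ => Nat.Prime q.2 ∧ Nat.count Nat.Prime q.2 = q.1 :=
    ((Primrec.nat_prime.comp Primrec.snd).and
      (Primrec.eq.comp (Primrec.nat_count_prime.comp Primrec.snd) Primrec.fst)).computablePred
  refine (Computable.find hP hex).of_eq fun n => ?_
  obtain ⟨hprime, hcount⟩ := Nat.find_spec (hex n)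
  rw [← Nat.nth_count hprime, hcount]

end Computability

namespace CQP

open FirstOrder FirstOrder.Language FirstOrder.Language.BoundedFormula

section Arithmetic

open FirstOrder.Language.Structure

variable {M : Type*} [Lang.Structure M]

-- Local instances only: on `ℕ` they would compete with the standard operations.
abbrev structureAdd : Add M := ⟨fun x y => funMap (L := Lang) Func.plus ![x, y]⟩
abbrev structureMul : Mul M := ⟨fun x y => funMap (L := Lang) Func.times ![x, y]⟩
abbrev structureZero : Zero M := ⟨funMap (L := Lang) Func.zero ![]⟩
abbrev structureOne : One M := ⟨funMap (L := Lang) Func.one ![]⟩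
abbrev structureLT : LT M := ⟨fun x y => RelMap (L := Lang) Rel.lt ![x, y]⟩

attribute [local instance] structureAdd structureMul structureZero structureOne structureLT

@[simp] theorem realize_tadd {β : Type} (v : β → M) (t u : Lang.Term β) :
    (tadd t u).realize v = t.realize v + u.realize v :=
  congrArg (funMap (L := Lang) Func.plus) (by ext i; fin_cases i <;> rfl)

@[simp] theorem realize_tmul {β : Type} (v : β → M) (t u : Lang.Term β) :
    (tmul t u).realize v = t.realize v * u.realize v :=
  congrArg (funMap (L := Lang) Func.times) (by ext i; fin_cases i <;> rfl)

@[simp] theorem realize_t0 {β : Type} (v : β → M) : (t0 : Lang.Term β).realize v = 0 :=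
  congrArg (funMap (L := Lang) Func.zero) (Subsingleton.elim _ _)

@[simp] theorem realize_t1 {β : Type} (v : β → M) : (t1 : Lang.Term β).realize v = 1 :=
  congrArg (funMap (L := Lang) Func.one) (Subsingleton.elim _ _)

@[simp] theorem realize_boundedFormula₂_lt {α : Type} {n : ℕ} (t u : Lang.Term (α ⊕ Fin n))
    (v : α → M) (xs : Fin n → M) :
    (Relations.boundedFormula₂ Rel.lt t u).Realize v xs ↔
      t.realize (Sum.elim v xs) < u.realize (Sum.elim v xs) := by
  erw [BoundedFormula.realize_rel₂]
  rfl

@[simp] theorem realize_ltR {n : ℕ} (x y : Fin n) (v : Empty → M) (xs : Fin n → M) :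
    (ltR x y).Realize v xs ↔ xs x < xs y := by
  simp [ltR]

@[simp] theorem realize_app {k m : ℕ} (φ : Lang.Formula (Fin k)) (g : Fin k → Fin m)
    (v : Empty → M) (xs : Fin m → M) : (app φ g).Realize v xs ↔ φ.Realize (xs ∘ g) := by
  rw [app, BoundedFormula.realize_relabel, Formula.Realize]
  congr!

theorem PA.add_comm (hM : M ⊨ PA) (x y : M) : x + y = y + x := by
  simpa using realize_alls.1 (hM.realize_of_mem axAddComm (by simp [PA])) ![x, y]

theorem PA.add_assoc (hM : M ⊨ PA) (x y z : M) : x + y + z = x + (y + z) := by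
  simpa using realize_alls.1 (hM.realize_of_mem axAddAssoc (by simp [PA])) ![x, y, z]

theorem PA.mul_comm (hM : M ⊨ PA) (x y : M) : x * y = y * x := by
  simpa using realize_alls.1 (hM.realize_of_mem axMulComm (by simp [PA])) ![x, y]

theorem PA.mul_assoc (hM : M ⊨ PA) (x y z : M) : x * y * z = x * (y * z) := by
  simpa using realize_alls.1 (hM.realize_of_mem axMulAssoc (by simp [PA])) ![x, y, z]

theorem PA.mul_add (hM : M ⊨ PA) (x y z : M) : x * (y + z) = x * y + x * z := by
  simpa using realize_alls.1 (hM.realize_of_mem axDistrib (by simp [PA])) ![x, y, z]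

theorem PA.add_zero (hM : M ⊨ PA) (x : M) : x + 0 = x := by
  simpa using realize_alls.1 (hM.realize_of_mem axAddZero (by simp [PA])) ![x]

theorem PA.mul_zero (hM : M ⊨ PA) (x : M) : x * 0 = 0 := by
  simpa using realize_alls.1 (hM.realize_of_mem axMulZero (by simp [PA])) ![x]

theorem PA.mul_one (hM : M ⊨ PA) (x : M) : x * 1 = x := by
  simpa using realize_alls.1 (hM.realize_of_mem axMulOne (by simp [PA])) ![x]

theorem PA.add_left_cancel (hM : M ⊨ PA) {x y z : M} (h : x + y = x + z) : y = z := by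
  simpa using
    realize_alls.1 (hM.realize_of_mem axAddCancel (by simp [PA])) ![x, y, z] (by simpa using h)

theorem PA.add_one_ne_zero (hM : M ⊨ PA) (x : M) : x + 1 ≠ 0 := by
  simpa using realize_alls.1 (hM.realize_of_mem axSuccNeZero (by simp [PA])) ![x]

theorem PA.lt_iff_exists_add (hM : M ⊨ PA) (x y : M) :
    x < y ↔ ∃ d, d ≠ 0 ∧ x + d = y := by
  simpa [Fin.snoc] using realize_alls.1 (hM.realize_of_mem axLtDef (by simp [PA])) ![x, y]

theorem PA.lt_trichotomy (hM : M ⊨ PA) (x y : M) : x < y ∨ x = y ∨ y < x := by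
  simpa using realize_alls.1 (hM.realize_of_mem axLtTrichotomy (by simp [PA])) ![x, y]

theorem PA.induction (hM : M ⊨ PA) {k : ℕ} (φ : Lang.Formula (Fin (k + 1))) (xs : Fin k → M)
    (zero : φ.Realize (Fin.snoc xs 0))
    (succ : ∀ x : M, φ.Realize (Fin.snoc xs x) → φ.Realize (Fin.snoc xs (x + 1))) (x : M) :
    φ.Realize (Fin.snoc xs x) := by
  have h := realize_alls.1 (hM.realize_of_mem (indAx φ) (Or.inr ⟨k, φ, rfl⟩)) xs
  have hk : (⟨k + 1, by omega⟩ : Fin (k + 3)) = (Fin.last (k + 1)).castSucc := rfl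
  simp only [Function.comp_apply, realize_all, realize_imp, realize_inf, realize_bdEqual,
    realize_app, Term.realize_var, Sum.elim_inr, realize_t0, realize_t1, realize_tadd, hk,
    Fin.comp_snoc, Fin.snoc_comp_castSucc, Fin.snoc_castSucc, Fin.snoc_last, and_imp,
    forall_eq] at h
  simp only [Function.comp_def, Fin.snoc_castSucc] at h
  exact h zero succ x

-- Reducible, so that instance unification sees through it to the `+`, `*` of the structure.
abbrev PA.commSemiring (hM : M ⊨ PA) : CommSemiring M where
  add := (· + ·)
  mul := (· * ·)
  zero := 0
  one := 1
  add_assoc := PA.add_assoc hM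
  zero_add x := by rw [PA.add_comm hM, PA.add_zero hM]
  add_zero := PA.add_zero hM
  add_comm := PA.add_comm hM
  nsmul := nsmulRec
  left_distrib := PA.mul_add hM
  right_distrib x y z := by
    rw [PA.mul_comm hM, PA.mul_add hM, PA.mul_comm hM z, PA.mul_comm hM z]
  zero_mul x := by rw [PA.mul_comm hM, PA.mul_zero hM]
  mul_zero := PA.mul_zero hM
  mul_assoc := PA.mul_assoc hM
  one_mul x := by rw [PA.mul_comm hM, PA.mul_one hM]
  mul_one := PA.mul_one hM
  mul_comm := PA.mul_comm hM

/-- `x = 0 ∨ ∃ y, x = y + 1`, with `x` the free variable `0`. -/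
def zeroOrSuccFormula : Lang.Formula (Fin 1) :=
  (Term.var (Sum.inl 0) =' t0) ⊔ ∃' (Term.var (Sum.inl 0) =' tadd (&0) t1)

/-- `∃ q r, r < p ∧ a = q * p + r`, with `p`, `a` the free variables `0`, `1`. -/
def divisionFormula : Lang.Formula (Fin 2) :=
  ∃' ∃' (Relations.boundedFormula₂ Rel.lt (&1) (Term.var (Sum.inl 0)) ⊓
    (Term.var (Sum.inl 1) =' tadd (tmul (&0) (Term.var (Sum.inl 0))) (&1)))

theorem PA.eq_zero_or_eq_add_one (hM : M ⊨ PA) (x : M) : x = 0 ∨ ∃ y, x = y + 1 := by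
  have hφ (x : M) :
      zeroOrSuccFormula.Realize (Fin.snoc default x) ↔ x = 0 ∨ ∃ y, x = y + 1 := by
    simp [zeroOrSuccFormula, Formula.Realize, Fin.snoc]
  exact (hφ x).1 (PA.induction hM zeroOrSuccFormula default ((hφ 0).2 (Or.inl rfl))
    (fun y _ => (hφ _).2 (Or.inr ⟨y, rfl⟩)) x)

theorem PA.add_right_cancel (hM : M ⊨ PA) {x y z : M} (h : x + z = y + z) : x = y :=
  PA.add_left_cancel hM (by rwa [PA.add_comm hM z, PA.add_comm hM z])

theorem PA.eq_zero_of_add_eq_zero (hM : M ⊨ PA) {x y : M} (h : x + y = 0) : x = 0 := by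
  rcases PA.eq_zero_or_eq_add_one hM y with rfl | ⟨y, rfl⟩
  · rwa [PA.add_zero hM] at h
  · exact absurd (by rwa [← PA.add_assoc hM] at h) (PA.add_one_ne_zero hM (x + y))

theorem PA.lt_add_of_ne_zero (hM : M ⊨ PA) (x : M) {d : M} (hd : d ≠ 0) : x < x + d :=
  (PA.lt_iff_exists_add hM _ _).2 ⟨d, hd, rfl⟩

theorem PA.lt_irrefl (hM : M ⊨ PA) (x : M) : ¬ x < x := by
  intro h
  obtain ⟨d, hd, hxd⟩ := (PA.lt_iff_exists_add hM x x).1 h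
  exact hd (PA.add_left_cancel hM (hxd.trans (PA.add_zero hM x).symm))

theorem PA.lt_asymm (hM : M ⊨ PA) {x y : M} (hxy : x < y) : ¬ y < x := by
  intro hyx
  obtain ⟨d, hd, rfl⟩ := (PA.lt_iff_exists_add hM x y).1 hxy
  obtain ⟨e, -, he⟩ := (PA.lt_iff_exists_add hM _ x).1 hyx
  refine hd (PA.eq_zero_of_add_eq_zero hM (y := e) (PA.add_left_cancel hM (x := x) ?_))
  rw [← PA.add_assoc hM, he, PA.add_zero hM]

theorem PA.not_lt_add_one_of_lt (hM : M ⊨ PA) {x y : M} (hxy : x < y) : ¬ y < x + 1 := by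
  let := PA.commSemiring hM
  intro hyx
  obtain ⟨e, he, rfl⟩ := (PA.lt_iff_exists_add hM x y).1 hxy
  obtain ⟨d, hd, hed⟩ := (PA.lt_iff_exists_add hM _ _).1 hyx
  rcases PA.eq_zero_or_eq_add_one hM e with rfl | ⟨e, rfl⟩
  · exact he rfl
  have h1 : e + d + 1 = 0 + 1 := PA.add_left_cancel hM (x := x) (by rw [zero_add, ← hed]; ring)
  have h2 : d + e = 0 := by rw [PA.add_comm hM]; exact PA.add_right_cancel hM h1
  exact hd (PA.eq_zero_of_add_eq_zero hM h2)

theorem PA.mul_ne_zero (hM : M ⊨ PA) {x y : M} (hx : x ≠ 0) (hy : y ≠ 0) : x * y ≠ 0 := by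
  let := PA.commSemiring hM
  rcases PA.eq_zero_or_eq_add_one hM x with rfl | ⟨x, rfl⟩
  · exact absurd rfl hx
  rcases PA.eq_zero_or_eq_add_one hM y with rfl | ⟨y, rfl⟩
  · exact absurd rfl hy
  rw [show (x + 1) * (y + 1) = x * (y + 1) + y + 1 by ring]
  exact PA.add_one_ne_zero hM _

theorem PA.mul_lt_mul_of_lt (hM : M ⊨ PA) {x y : M} (h : x < y) {p : M} (hp : p ≠ 0) :
    x * p < y * p := by
  let := PA.commSemiring hM
  obtain ⟨d, hd, rfl⟩ := (PA.lt_iff_exists_add hM x y).1 h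
  rw [add_mul]
  exact PA.lt_add_of_ne_zero hM _ (PA.mul_ne_zero hM hd hp)

theorem PA.lt_of_mul_lt_mul (hM : M ⊨ PA) {x y p : M} (hp : p ≠ 0) (h : x * p < y * p) :
    x < y := by
  rcases PA.lt_trichotomy hM x y with hxy | rfl | hyx
  · exact hxy
  · exact absurd h (PA.lt_irrefl hM _)
  · exact absurd h (PA.lt_asymm hM (PA.mul_lt_mul_of_lt hM hyx hp))

theorem PA.exists_eq_mul_add_lt (hM : M ⊨ PA) {p : M} (hp : p ≠ 0) (a : M) :
    ∃ q, ∃ r < p, a = q * p + r := by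
  let := PA.commSemiring hM
  have hφ (x : M) :
      divisionFormula.Realize (Fin.snoc ![p] x) ↔ ∃ q, ∃ r < p, x = q * p + r := by
    simp [divisionFormula, Formula.Realize, Fin.snoc]
  have hzero : 0 < p := (PA.lt_iff_exists_add hM 0 p).2 ⟨p, hp, zero_add p⟩
  refine (hφ a).1 (PA.induction hM divisionFormula ![p] ((hφ 0).2 ⟨0, 0, hzero, by ring⟩)
    (fun x hx => (hφ _).2 ?_) a)
  obtain ⟨q, r, hr, rfl⟩ := (hφ x).1 hx
  rcases PA.lt_trichotomy hM (r + 1) p with hlt | heq | hgt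
  · exact ⟨q, r + 1, hlt, by ring⟩
  · exact ⟨q + 1, 0, hzero, by rw [← heq]; ring⟩
  · exact absurd hgt (PA.not_lt_add_one_of_lt hM hr)

theorem PA.not_exists_mul_eq_iff (hM : M ⊨ PA) {p : M} (hp : p ≠ 0) (a : M) :
    (¬ ∃ x, x * p = a) ↔ ∃ q, q * p < a ∧ a < (q + 1) * p := by
  let := PA.commSemiring hM
  constructor
  · intro hndvd
    obtain ⟨q, r, hr, rfl⟩ := PA.exists_eq_mul_add_lt hM hp a
    have hr0 : r ≠ 0 := by
      rintro rfl
      exact hndvd ⟨q, (PA.add_zero hM _).symm⟩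
    obtain ⟨s, hs, rfl⟩ := (PA.lt_iff_exists_add hM r p).1 hr
    refine ⟨q, PA.lt_add_of_ne_zero hM _ hr0, ?_⟩
    rw [show (q + 1) * (r + s) = q * (r + s) + r + s by ring]
    exact PA.lt_add_of_ne_zero hM _ hs
  · rintro ⟨q, hlo, hhi⟩ ⟨x, rfl⟩
    exact PA.not_lt_add_one_of_lt hM (PA.lt_of_mul_lt_mul hM hp hlo)
      (PA.lt_of_mul_lt_mul hM hp hhi)

end Arithmetic

section Presentation

open FirstOrder.Language.Structure

attribute [local instance] structureAdd structureMul structureZero structureOne structureLT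

variable {add mul : ℕ → ℕ → ℕ} {lt : ℕ → ℕ → Prop} {zbar obar : ℕ} {E : ℕ → ℕ → Prop}
  {hE : Equivalence E} {ha : ∀ x x' y y', E x x' → E y y' → E (add x y) (add x' y')}
  {hm : ∀ x x' y y', E x x' → E y y' → E (mul x y) (mul x' y')}
  {hl : ∀ x x' y y', E x x' → E y y' → (lt x y ↔ lt x' y')}

theorem pres_mk_add (x y : ℕ) :
    letI := pres add mul lt zbar obar E hE ha hm hl
    (Quotient.mk _ x + Quotient.mk _ y : Quotient (Setoid.mk E hE)) = Quotient.mk _ (add x y) := by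
  let := pres add mul lt zbar obar E hE ha hm hl
  refine (congrArg (funMap (L := Lang) Func.plus) ?_).trans
    (funMap_quotient_mk' (L := Lang) (Setoid.mk E hE) Func.plus ![x, y])
  ext i
  fin_cases i <;> rfl

theorem pres_mk_mul (x y : ℕ) :
    letI := pres add mul lt zbar obar E hE ha hm hl
    (Quotient.mk _ x * Quotient.mk _ y : Quotient (Setoid.mk E hE)) = Quotient.mk _ (mul x y) := by
  let := pres add mul lt zbar obar E hE ha hm hl
  refine (congrArg (funMap (L := Lang) Func.times) ?_).trans
    (funMap_quotient_mk' (L := Lang) (Setoid.mk E hE) Func.times ![x, y])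
  ext i
  fin_cases i <;> rfl

theorem pres_one :
    letI := pres add mul lt zbar obar E hE ha hm hl
    (1 : Quotient (Setoid.mk E hE)) = Quotient.mk _ obar := by
  let := pres add mul lt zbar obar E hE ha hm hl
  exact (congrArg (funMap (L := Lang) Func.one) (Subsingleton.elim _ _)).trans
    (funMap_quotient_mk' (L := Lang) (Setoid.mk E hE) Func.one ![])

theorem pres_mk_lt_mk (x y : ℕ) :
    letI := pres add mul lt zbar obar E hE ha hm hl
    (Quotient.mk _ x < (Quotient.mk _ y : Quotient (Setoid.mk E hE))) ↔ lt x y := by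
  let := pres add mul lt zbar obar E hE ha hm hl
  refine (Iff.of_eq (congrArg (RelMap (L := Lang) Rel.lt) ?_)).trans
    (relMap_quotient_mk' (L := Lang) (Setoid.mk E hE) Rel.lt ![x, y])
  ext i
  fin_cases i <;> rfl

theorem pres_mk_nbar_ne_zero
    (hmodel : letI := pres add mul lt zbar obar E hE ha hm hl
      Quotient (Setoid.mk E hE) ⊨ PA) {n : ℕ} (hn : n ≠ 0) :
    letI := pres add mul lt zbar obar E hE ha hm hl
    (Quotient.mk _ (nbar add zbar obar n) : Quotient (Setoid.mk E hE)) ≠ 0 := by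
  let := pres add mul lt zbar obar E hE ha hm hl
  obtain ⟨n, rfl⟩ := Nat.exists_eq_succ_of_ne_zero hn
  have h := PA.add_one_ne_zero hmodel (Quotient.mk _ (nbar add zbar obar n))
  rw [pres_one, pres_mk_add] at h
  exact h

theorem pres_not_exists_mul_iff
    (hmodel : letI := pres add mul lt zbar obar E hE ha hm hl
      Quotient (Setoid.mk E hE) ⊨ PA) {p : ℕ}
    (hp : letI := pres add mul lt zbar obar E hE ha hm hl
      (Quotient.mk _ p : Quotient (Setoid.mk E hE)) ≠ 0) (a : ℕ) :
    (¬ ∃ x, E (mul x p) a) ↔ ∃ q, lt (mul q p) a ∧ lt a (mul (add q obar) p) := by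
  let := pres add mul lt zbar obar E hE ha hm hl
  have key := PA.not_exists_mul_eq_iff hmodel hp (Quotient.mk _ a)
  simp only [Quotient.exists, pres_mk_mul, pres_one, pres_mk_add, pres_mk_lt_mk, Quotient.eq] at key
  exact key

end Presentation

open Nat.Partrec (Code)
open Nat.Partrec.Code Encodable

theorem haltingProblem_re : REPred haltingProblem :=
  (eval_part.comp (Computable.ofNat Code) Computable.id).dom_re

/-- `c ↦ c ∘ const 0` reduces the halting problem on input `0` to `0'`. -/
theorem haltingProblem_not_computable : ¬ ComputablePred haltingProblem := by
  intro h
  obtain ⟨f, hf, hfh⟩ := ComputablePred.computable_iff.1 h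
  have hcomp : Computable fun c : Code => encode (c.comp (Code.const 0)) :=
    (Primrec.encode.comp (primrec₂_comp.comp Primrec.id (Primrec.const _))).to_comp
  refine ComputablePred.halting_problem 0 (ComputablePred.computable_iff.2
    ⟨_, hf.comp hcomp, funext fun c => ?_⟩)
  rw [← congrFun hfh]
  simp only [haltingProblem, Denumerable.ofNat_encode, eval, eval_const]
  exact congrArg Part.Dom (Part.bind_some 0 c.eval).symm

theorem computable_nbar {add : ℕ → ℕ → ℕ} (hadd : Computable₂ add) (zbar obar : ℕ) :
    Computable (nbar add zbar obar) := by
  refine (Computable.nat_rec Computable.id (Computable.const zbar)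
    (hadd.comp (Computable.snd.comp Computable.snd) (Computable.const obar)).to₂).of_eq
    fun n => ?_
  induction n with
  | zero => rfl
  | succ n ih => simp [nbar, ← ih]

theorem rePred_exists_lt_mul_and_lt_mul_add {add mul : ℕ → ℕ → ℕ} {lt : ℕ → ℕ → Prop}
    (hadd : Computable₂ add) (hmul : Computable₂ mul) (hlt : REPred fun p : ℕ × ℕ => lt p.1 p.2)
    {f : ℕ → ℕ} (hf : Computable f) (a o : ℕ) :
    REPred fun n => ∃ q, lt (mul q (f n)) a ∧ lt a (mul (add q o) (f n)) :=
  REPred.exists (p := fun x : ℕ × ℕ => lt (mul x.2 (f x.1)) a ∧ lt a (mul (add x.2 o) (f x.1)))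
    ((hlt.comp ((hmul.comp Computable.snd (hf.comp Computable.fst)).pair
      (Computable.const a))).and
    (hlt.comp ((Computable.const a).pair (hmul.comp (hadd.comp Computable.snd (Computable.const o))
      (hf.comp Computable.fst)))))

theorem no_ce_quotient_presentation_full_language_halting_in_standard_system_general
    (add mul : ℕ → ℕ → ℕ) (lt : ℕ → ℕ → Prop) (zbar obar : ℕ) (E : ℕ → ℕ → Prop)
    (hadd : Computable₂ add) (hmul : Computable₂ mul)
    (hlt : REPred fun p : ℕ × ℕ => lt p.1 p.2)
    (hE : Equivalence E)
    (ha : ∀ x x' y y', E x x' → E y y' → E (add x y) (add x' y'))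
    (hm : ∀ x x' y y', E x x' → E y y' → E (mul x y) (mul x' y'))
    (hl : ∀ x x' y y', E x x' → E y y' → (lt x y ↔ lt x' y'))
    (hmodel : letI := pres add mul lt zbar obar E hE ha hm hl
      Quotient (Setoid.mk E hE) ⊨ PA)
    -- the halting problem `0'` belongs to the standard system of the quotient model,
    -- as witnessed by a code `a`
    (a : ℕ)
    (hstdsys : ∀ n : ℕ,
      haltingProblem n ↔ ∃ x : ℕ, E (mul x (nbar add zbar obar (Nat.nth Nat.Prime n))) a) :
    False := by
  have hcompl : REPred fun n => ¬ haltingProblem n := by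
    refine (rePred_exists_lt_mul_and_lt_mul_add hadd hmul hlt
      ((computable_nbar hadd zbar obar).comp Computable.nat_nth_prime) a obar).of_eq fun n => ?_
    rw [hstdsys, pres_not_exists_mul_iff hmodel
      (pres_mk_nbar_ne_zero hmodel (Nat.prime_nth_prime n).ne_zero)]
  exact haltingProblem_not_computable
    (ComputablePred.computable_iff_re_compl_re'.2 ⟨haltingProblem_re, hcompl⟩)

/-- **Corollary.** No nonstandard model of arithmetic in the language `{+, ·, 0, 1, <}`
with `0'` in its standard system has a computably enumerable quotient presentation by
any equivalence relation, of any complexity. -/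
theorem no_ce_quotient_presentation_full_language_halting_in_standard_system
    (add mul : ℕ → ℕ → ℕ) (lt : ℕ → ℕ → Prop) (zbar obar : ℕ) (E : ℕ → ℕ → Prop)
    (hadd : Computable₂ add) (hmul : Computable₂ mul)
    (hlt : REPred fun p : ℕ × ℕ => lt p.1 p.2)
    (hE : Equivalence E)
    (ha : ∀ x x' y y', E x x' → E y y' → E (add x y) (add x' y'))
    (hm : ∀ x x' y y', E x x' → E y y' → E (mul x y) (mul x' y'))
    (hl : ∀ x x' y y', E x x' → E y y' → (lt x y ↔ lt x' y'))
    (hmodel : letI := pres add mul lt zbar obar E hE ha hm hl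
      Quotient (Setoid.mk E hE) ⊨ PA)
    (hnonstd : letI := pres add mul lt zbar obar E hE ha hm hl
      ¬ Nonempty (Quotient (Setoid.mk E hE) ≃[Lang] ℕ))
    -- the halting problem `0'` belongs to the standard system of the quotient model,
    -- as witnessed by a code `a`
    (a : ℕ)
    (hstdsys : ∀ n : ℕ,
      haltingProblem n ↔ ∃ x : ℕ, E (mul x (nbar add zbar obar (Nat.nth Nat.Prime n))) a) :
    False :=
  no_ce_quotient_presentation_full_language_halting_in_standard_system_general add mul lt zbar obar
    E hadd hmul hlt hE ha hm hl hmodel a hstdsys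

end CQP
end
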